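/- arXiv:1012.3700 — 3 statements merged into one kernel-verified Lean document; each statement's English description precedes it below -/
import Mathlib

section
/- For all natural numbers r and m, the sum over k from 0 to r of binom(r,k)·(−1)^k·(r−2k)^m equals 2^r times the m-th derivative of sinh^r(t) evaluated at t = 0. -/
open Finset

lemma iteratedDeriv_fun_sum' {ι : Type*} {u : Finset ι} {f : ι → ℝ → ℝ} {n : ℕ}
    (h : ∀ j ∈ u, ContDiff ℝ n (f j)) (x : ℝ) :
    iteratedDeriv n (fun t => ∑ j ∈ u, f j t) x = ∑ j ∈ u, iteratedDeriv n (f j) x := by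
  simp only [iteratedDeriv_eq_iteratedFDeriv]
  have := iteratedFDeriv_sum (𝕜 := ℝ) (i := n) h
  have h2 : (fun t => ∑ j ∈ u, f j t) = (∑ j ∈ u, f j ·) := by
    funext t; simp
  rw [h2, this]
  simp

lemma iteratedDeriv_cmul {n : ℕ} {f : ℝ → ℝ} (h : ContDiff ℝ n f) (c x : ℝ) :
    iteratedDeriv n (fun t => c * f t) x = c * iteratedDeriv n f x := by
  simp_rw [← iteratedDerivWithin_univ]
  exact iteratedDerivWithin_const_mul (Set.mem_univ x) uniqueDiffOn_univ c h.contDiffWithinAt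

lemma key (r : ℕ) : (fun t : ℝ => (2:ℝ) ^ r * Real.sinh t ^ r) =
    fun t => ∑ k ∈ Finset.range (r + 1),
      (r.choose k : ℝ) * (-1) ^ k * Real.exp (((r : ℝ) - 2 * k) * t) := by
  funext t
  have h : (2:ℝ) * Real.sinh t = Real.exp t - Real.exp (-t) := by
    rw [Real.sinh_eq]; ring
  rw [← mul_pow, h, sub_pow,
    ← Finset.sum_range_reflect
      (fun j => (-1:ℝ) ^ (j + r) * Real.exp t ^ j * Real.exp (-t) ^ (r - j) * r.choose j) (r+1)]
  refine Finset.sum_congr rfl fun k hk => ?_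
  have hkr : k ≤ r := Nat.lt_succ_iff.mp (Finset.mem_range.mp hk)
  simp only [Nat.add_sub_cancel]
  rw [Nat.sub_sub_self hkr, Nat.choose_symm hkr,
    show r - k + r = k + 2 * (r - k) by omega, pow_add, pow_mul, neg_one_sq, one_pow, mul_one,
    ← Real.exp_nat_mul, ← Real.exp_nat_mul]
  have hrk : (↑(r - k) : ℝ) = r - k := by push_cast [hkr]; ring
  rw [hrk, show ((r:ℝ) - 2 * k) * t = (↑r - ↑k) * t + ↑k * -t by ring, Real.exp_add]
  ring

theorem sum_binom_eq_deriv_sinh_pow (r m : ℕ) :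
    ∑ k ∈ Finset.range (r + 1),
      (r.choose k : ℝ) * (-1) ^ k * ((r : ℝ) - 2 * k) ^ m =
    2 ^ r * iteratedDeriv m (fun t : ℝ => Real.sinh t ^ r) 0 := by
  have hsinh : ContDiff ℝ m (fun t : ℝ => Real.sinh t ^ r) :=
    Real.contDiff_sinh.pow r
  rw [← iteratedDeriv_cmul hsinh ((2:ℝ)^r) 0, key r,
    iteratedDeriv_fun_sum' (fun j hj => by fun_prop) 0]
  refine Finset.sum_congr rfl fun k hk => ?_
  have hc : ContDiff ℝ m (fun t : ℝ => Real.exp (((r:ℝ) - 2 * k) * t)) := by fun_prop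
  rw [iteratedDeriv_cmul hc _ 0, iteratedDeriv_exp_const_mul m ((r : ℝ) - 2 * k)]
  simp
end

section
/- Define u_{n,k} = (−1)^k / (k! · Γ(ν+n−k+1)) · ((ν+n−2k)/2)^{ν+n} and v_{n,k} = (1/2)·(ν+n−2k)^2·Γ(ν+n−k)/k! · (2/(ν+n))^{ν+n−2k+1}. Then for natural numbers k ≤ s, Σ_{j=k}^{s} u_{2j,j−k}·v_{2s,s−j} = δ_{k,s} (the Kronecker delta), for any real ν > 0. -/
open Finset

/-- The coefficient `u_{n,k}` connecting Kapteyn series of the first kind to Taylor series. -/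
noncomputable def kapteynU (ν : ℝ) (n k : ℕ) : ℝ :=
  (-1) ^ k / (k.factorial * Real.Gamma (ν + n - k + 1)) *
    Real.rpow ((ν + n - 2 * k) / 2) (ν + n)

/-- The coefficient `v_{n,k}` connecting Taylor series to Kapteyn series of the first kind. -/
noncomputable def kapteynV (ν : ℝ) (n k : ℕ) : ℝ :=
  (1 / 2) * (ν + n - 2 * k) ^ 2 * Real.Gamma (ν + n - k) / k.factorial *
    Real.rpow (2 / (ν + n)) (ν + n - 2 * k + 1)

noncomputable def kapR (a : ℝ) (n i : ℕ) : ℝ := ∏ t ∈ Finset.range (n - 1), (a + i + 1 + t)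

noncomputable def kapT (a : ℝ) (n i : ℕ) : ℝ :=
  (-1) ^ i * (a + 2 * i) ^ 2 * a ^ (2 * i) * (a + 2 * n) ^ (2 * (n - i)) * kapR a n i /
    (i.factorial * (n - i).factorial)

noncomputable def kapH (a : ℝ) (n i : ℕ) : ℝ :=
  (-1) ^ (i + 1) * i * (a + i) * a ^ (2 * i) * (a + 2 * n) ^ (2 * (n - i) + 2) * kapR a n i /
    (i.factorial * (n - i).factorial * n * (n + a))

lemma kapR_pos (a : ℝ) (ha : 0 < a) (n i : ℕ) : 0 < kapR a n i := by
  apply Finset.prod_pos; intro t _; positivity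

lemma kapR_succ (a : ℝ) (n i : ℕ) (hn : 1 ≤ n) :
    (a + i + 1) * kapR a n (i + 1) = (a + i + n) * kapR a n i := by
  obtain ⟨m, rfl⟩ : ∃ m, n = m + 1 := ⟨n - 1, by omega⟩
  simp only [kapR, Nat.add_sub_cancel]
  have h1 : ∀ t ∈ Finset.range m, (a + ↑(i + 1) + 1 + (t : ℝ)) = a + i + 1 + ((t : ℕ) + 1 : ℕ) := by
    intro t _; push_cast; ring
  rw [Finset.prod_congr rfl h1]
  have e1 := Finset.prod_range_succ' (fun t : ℕ => a + i + 1 + t) m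
  have e2 := Finset.prod_range_succ (fun t : ℕ => a + i + 1 + t) m
  have e1' : (∏ x ∈ Finset.range m, (a + ↑i + 1 + ((x : ℕ) + 1 : ℕ))) * (a + ↑i + 1) =
      ∏ t ∈ Finset.range (m + 1), (a + ↑i + 1 + (t : ℝ)) := by rw [e1]; norm_num
  rw [mul_comm, e1', e2]
  push_cast
  ring

lemma kapT_step (a : ℝ) (ha : 0 < a) (n i : ℕ) (hi : i < n) :
    kapT a n i = kapH a n (i + 1) - kapH a n i := by
  obtain ⟨m, rfl⟩ : ∃ m, n = i + 1 + m := ⟨n - i - 1, by omega⟩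
  have hR := kapR_succ a (i + 1 + m) i (by omega)
  have hs1 : a + (i : ℝ) + 1 ≠ 0 := by positivity
  have hR' : kapR a (i + 1 + m) (i + 1) = (a + i + ↑(i + 1 + m)) * kapR a (i + 1 + m) i / (a + i + 1) := by
    rw [eq_div_iff hs1]; linarith [hR]
  simp only [kapT, kapH]
  have h1 : i + 1 + m - i = m + 1 := by omega
  have h2 : i + 1 + m - (i + 1) = m := by omega
  rw [h1, h2, hR']
  have h3 : 2 * (m + 1) = 2 * m + 2 := by ring
  rw [h3]
  have hfi : ((i.factorial : ℝ)) ≠ 0 := by exact_mod_cast i.factorial_ne_zero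
  have hfm : ((m.factorial : ℝ)) ≠ 0 := by exact_mod_cast m.factorial_ne_zero
  have hn0 : ((i + 1 + m : ℕ) : ℝ) ≠ 0 := by positivity
  have hna : ((i + 1 + m : ℕ) : ℝ) + a ≠ 0 := by positivity
  rw [Nat.factorial_succ i, Nat.factorial_succ m]
  push_cast
  field_simp
  ring

lemma kapT_last (a : ℝ) (ha : 0 < a) (n : ℕ) (hn : 1 ≤ n) : kapT a n n = - kapH a n n := by
  simp only [kapT, kapH, Nat.sub_self, Nat.factorial_zero, Nat.mul_zero, pow_zero]
  have hn0 : ((n : ℝ)) ≠ 0 := Nat.cast_ne_zero.mpr (by omega)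
  have hna : ((n : ℝ)) + a ≠ 0 := by positivity
  have hfn : ((n.factorial : ℝ)) ≠ 0 := by exact_mod_cast n.factorial_ne_zero
  field_simp
  ring

lemma kapH_zero (a : ℝ) (n : ℕ) : kapH a n 0 = 0 := by
  simp [kapH]

lemma kap_key (a : ℝ) (ha : 0 < a) (n : ℕ) (hn : 1 ≤ n) :
    ∑ i ∈ Finset.range (n + 1), kapT a n i = 0 := by
  rw [Finset.sum_range_succ]
  have h1 : ∑ i ∈ Finset.range n, kapT a n i = ∑ i ∈ Finset.range n, (kapH a n (i + 1) - kapH a n i) :=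
    Finset.sum_congr rfl fun i hi => kapT_step a ha n i (Finset.mem_range.mp hi)
  rw [h1, Finset.sum_range_sub, kapH_zero, kapT_last a ha n hn]
  ring

lemma kapGamma_nat_add (x : ℝ) (hx : 0 < x) (m : ℕ) :
    Real.Gamma (x + m) = Real.Gamma x * ∏ t ∈ Finset.range m, (x + t) := by
  induction m with
  | zero => simp
  | succ p ih =>
    have h1 : x + ((p : ℕ) + 1 : ℕ) = (x + p) + 1 := by push_cast; ring
    rw [h1, Real.Gamma_add_one (by positivity), ih, Finset.prod_range_succ]
    ring

lemma kap_term (ν : ℝ) (hν : 0 < ν) (k n i : ℕ) (hn : 1 ≤ n) (hi : i ≤ n) :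
    kapteynU ν (2 * (k + i)) (k + i - k) * kapteynV ν (2 * (k + n)) (k + n - (k + i)) =
      Real.rpow ((ν + 2 * k) / (ν + 2 * k + 2 * n)) ν *
        ((ν + 2 * k) / (ν + 2 * k + 2 * n)) ^ (2 * k) /
        ((ν + 2 * k + 2 * n) * (ν + 2 * k + 2 * n) ^ (2 * n)) * kapT (ν + 2 * k) n i := by
  have hD : (0:ℝ) < ν + 2 * k + 2 * n := by positivity
  have hA : (0:ℝ) < ν + 2 * k := by positivity
  rw [Nat.add_sub_cancel_left, show k + n - (k + i) = n - i from by omega]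
  rw [kapteynU, kapteynV, kapT]
  have c1 : ν + ↑(2 * (k + i)) - ↑i + 1 = ν + 2 * ↑k + ↑i + 1 := by push_cast; ring
  have c2 : (ν + ↑(2 * (k + i)) - 2 * ↑i) / 2 = (ν + 2 * ↑k) / 2 := by push_cast; ring
  have c3 : ν + ↑(2 * (k + n)) - 2 * (↑(n - i) : ℝ) = ν + 2 * ↑k + 2 * ↑i := by
    rw [Nat.cast_sub hi]; push_cast; ring
  have c4 : ν + ↑(2 * (k + n)) - (↑(n - i) : ℝ) = (ν + 2 * ↑k + ↑i + 1) + ↑(n - 1) := by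
    rw [Nat.cast_sub hi, Nat.cast_sub hn]; push_cast; ring
  have c5 : (2 : ℝ) / (ν + ↑(2 * (k + n))) = 2 / (ν + 2 * ↑k + 2 * ↑n) := by push_cast; ring_nf
  simp only [show ∀ x y : ℝ, Real.rpow x y = x ^ y from fun _ _ => rfl]
  rw [c1, c2, c3, c4, c5]
  rw [kapGamma_nat_add (ν + 2 * ↑k + ↑i + 1) (by positivity) (n - 1)]
  have cR : ∏ t ∈ Finset.range (n - 1), (ν + 2 * ↑k + ↑i + 1 + (t : ℝ)) = kapR (ν + 2 * k) n i := by
    rw [kapR]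
  rw [cR]
  -- notation shorthands
  have hq : (0:ℝ) < (ν + 2 * ↑k) / (ν + 2 * ↑k + 2 * ↑n) := by positivity
  have h2d : (0:ℝ) < 2 / (ν + 2 * ↑k + 2 * ↑n) := by positivity
  have e1 : ν + 2 * (k:ℝ) + 2 * ↑i + 1 = (ν + ↑(2 * (k + i))) + 1 := by push_cast; ring
  rw [e1, Real.rpow_add h2d, Real.rpow_one]
  have hsplit1 : ((ν + 2 * (k:ℝ)) / 2) ^ (ν + (↑(2 * (k + i)) : ℝ)) =
      ((ν + 2 * ↑k) / (ν + 2 * ↑k + 2 * ↑n)) ^ (ν + (↑(2 * (k + i)) : ℝ)) *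
        ((ν + 2 * ↑k + 2 * ↑n) / 2) ^ (ν + (↑(2 * (k + i)) : ℝ)) := by
    rw [← Real.mul_rpow (le_of_lt hq) (by positivity)]
    congr 1
    field_simp
  have hsplit2 : ((2:ℝ) / (ν + 2 * ↑k + 2 * ↑n)) ^ (ν + (↑(2 * (k + i)) : ℝ)) =
      (((ν + 2 * ↑k + 2 * ↑n) / 2) ^ (ν + (↑(2 * (k + i)) : ℝ)))⁻¹ := by
    rw [← Real.inv_rpow (by positivity)]
    congr 1
    rw [inv_div]
  have hsplit3 : ((ν + 2 * (k:ℝ)) / (ν + 2 * ↑k + 2 * ↑n)) ^ (ν + (↑(2 * (k + i)) : ℝ)) =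
      ((ν + 2 * ↑k) / (ν + 2 * ↑k + 2 * ↑n)) ^ ν *
        (((ν + 2 * ↑k) / (ν + 2 * ↑k + 2 * ↑n)) ^ (2 * k) *
          ((ν + 2 * ↑k) ^ (2 * i) * (ν + 2 * ↑k + 2 * ↑n) ^ (2 * (n - i)) /
            (ν + 2 * ↑k + 2 * ↑n) ^ (2 * n))) := by
    rw [Real.rpow_add hq, Real.rpow_natCast]
    congr 1
    rw [show 2 * (k + i) = 2 * k + 2 * i from by ring, pow_add]
    congr 1
    rw [div_pow, show 2 * n = 2 * i + 2 * (n - i) from by omega, pow_add]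
    exact (mul_div_mul_right _ _ (pow_ne_zero _ hD.ne')).symm
  rw [hsplit1, hsplit2, hsplit3]
  have hP : ((ν + 2 * (k:ℝ) + 2 * ↑n) / 2) ^ (ν + (↑(2 * (k + i)) : ℝ)) ≠ 0 :=
    (Real.rpow_pos_of_pos (by positivity) _).ne'
  have hG : Real.Gamma (ν + 2 * ↑k + ↑i + 1) ≠ 0 :=
    (Real.Gamma_pos_of_pos (by positivity)).ne'
  have hfi : ((i.factorial : ℝ)) ≠ 0 := by exact_mod_cast i.factorial_ne_zero
  have hfni : (((n - i).factorial : ℝ)) ≠ 0 := by exact_mod_cast (n - i).factorial_ne_zero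
  have hDne : (ν + 2 * (k:ℝ) + 2 * n) ≠ 0 := hD.ne'
  field_simp

theorem kapteyn_first_kind_biorthogonality (ν : ℝ) (hν : ν > 0) (k s : ℕ) (hks : k ≤ s) :
    ∑ j ∈ Finset.Icc k s, kapteynU ν (2 * j) (j - k) * kapteynV ν (2 * s) (s - j) =
      if k = s then 1 else 0 := by
  rcases eq_or_ne k s with rfl | hne
  · rw [if_pos rfl, Finset.Icc_self, Finset.sum_singleton, Nat.sub_self]
    rw [kapteynU, kapteynV]
    simp only [show ∀ x y : ℝ, Real.rpow x y = x ^ y from fun _ _ => rfl]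
    simp only [pow_zero, Nat.cast_zero, Nat.factorial_zero, Nat.cast_one, mul_zero, sub_zero,
      one_mul, mul_one, div_one]
    have hx : (0:ℝ) < ν + (↑(2 * k) : ℝ) := by positivity
    rw [Real.rpow_add (by positivity : (0:ℝ) < 2 / (ν + ↑(2 * k))), Real.rpow_one]
    have h2 : ((2:ℝ) / (ν + ↑(2 * k))) ^ (ν + (↑(2 * k) : ℝ)) =
        (((ν + ↑(2 * k)) / 2) ^ (ν + (↑(2 * k) : ℝ)))⁻¹ := by
      rw [← Real.inv_rpow (by positivity), inv_div]
    rw [h2, Real.Gamma_add_one hx.ne']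
    have hP : ((ν + (↑(2 * k):ℝ)) / 2) ^ (ν + (↑(2 * k) : ℝ)) ≠ 0 :=
      (Real.rpow_pos_of_pos (by positivity) _).ne'
    have hG : Real.Gamma (ν + ↑(2 * k)) ≠ 0 := (Real.Gamma_pos_of_pos hx).ne'
    field_simp
  · rw [if_neg hne]
    obtain ⟨n, rfl⟩ : ∃ n, s = k + n := ⟨s - k, by omega⟩
    have hn : 1 ≤ n := by omega
    rw [← Finset.Ico_add_one_right_eq_Icc, Finset.sum_Ico_eq_sum_range,
      show k + n + 1 - k = n + 1 from by omega]
    have hterm : ∀ i ∈ Finset.range (n + 1),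
        kapteynU ν (2 * (k + i)) (k + i - k) * kapteynV ν (2 * (k + n)) (k + n - (k + i)) =
        (Real.rpow ((ν + 2 * k) / (ν + 2 * k + 2 * n)) ν *
          ((ν + 2 * k) / (ν + 2 * k + 2 * n)) ^ (2 * k) /
          ((ν + 2 * k + 2 * n) * (ν + 2 * k + 2 * n) ^ (2 * n))) * kapT (ν + 2 * k) n i :=
      fun i hi => kap_term ν hν k n i hn (by have := Finset.mem_range.mp hi; omega)
    rw [Finset.sum_congr rfl hterm, ← Finset.mul_sum,
      kap_key (ν + 2 * k) (by positivity) n hn, mul_zero]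
end

section
/- For natural numbers s ≥ 1 and p, (1/2)·(1/(s!)^2·4^{s+p})·Σ_{k=0}^{2s} (−1)^k·binom(2s,k)·(2s−2k)^{2(s+p)} = (1/(4^p·(s!)^2))·(1/2)·(2s+2p)! · [t^{2p}](sinh(t)/t)^{2s}. -/
open Polynomial Finset


noncomputable def Dop : Polynomial ℝ → Polynomial ℝ := fun q => X * derivative q

lemma Dop_C_mul_X_pow (a : ℝ) (k : ℕ) : Dop (C a * X ^ k) = C (a * k) * X ^ k := by
  cases k with
  | zero => simp [Dop]
  | succ k =>
      simp only [Dop, derivative_C_mul, derivative_X_pow, Nat.cast_add, Nat.cast_one,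
        Nat.add_sub_cancel, C_mul]
      ring

lemma Dop_sum (F : Finset ℕ) (f : ℕ → Polynomial ℝ) :
    Dop (∑ k ∈ F, f k) = ∑ k ∈ F, Dop (f k) := by
  simp [Dop, derivative_sum, Finset.mul_sum]

lemma Dop_iter_sum (a : ℕ → ℝ) (F : Finset ℕ) (m : ℕ) :
    Dop^[m] (∑ k ∈ F, C (a k) * X ^ k) = ∑ k ∈ F, C (a k * (k : ℝ) ^ m) * X ^ k := by
  induction m with
  | zero => simp
  | succ m ih =>
      rw [Function.iterate_succ_apply', ih, Dop_sum]
      refine Finset.sum_congr rfl fun k _ => ?_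
      rw [Dop_C_mul_X_pow, pow_succ, mul_assoc]

lemma one_sub_X_pow (N : ℕ) :
    ((1 - X : Polynomial ℝ)) ^ N
      = ∑ k ∈ Finset.range (N + 1), C ((-1) ^ k * (N.choose k : ℝ)) * X ^ k := by
  have h : (1 - X : Polynomial ℝ) = (-X) + 1 := by ring
  rw [h, add_pow]
  refine Finset.sum_congr rfl fun k _ => ?_
  rw [neg_pow, C_mul, C_pow, map_neg, map_one, map_natCast]
  ring

lemma struct (N : ℕ) : ∀ m, m ≤ N → ∃ r : Polynomial ℝ,
    Dop^[m] ((1 - X) ^ N) = (1 - X) ^ (N - m) * r ∧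
      r.eval 1 = (-1) ^ m * (N.descFactorial m : ℝ) := by
  intro m
  induction m with
  | zero => intro _; exact ⟨1, by simp⟩
  | succ m ih =>
      intro hm
      obtain ⟨r, hr, he⟩ := ih (Nat.le_of_succ_le hm)
      refine ⟨X * ((- C ((N : ℝ) - m)) * r + (1 - X) * derivative r), ?_, ?_⟩
      · rw [Function.iterate_succ_apply', hr]
        have hNm : N - m = (N - (m + 1)) + 1 := by omega
        show X * derivative ((1 - X) ^ (N - m) * r) = _
        rw [derivative_mul, derivative_pow, hNm]
        have hc : ((N - (m+1) + 1 : ℕ) : ℝ) = (N : ℝ) - m := by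
          push_cast [Nat.cast_sub hm]
          ring
        rw [hc]
        have hd : derivative (1 - X : Polynomial ℝ) = -1 := by
          simp
        rw [hd, Nat.add_sub_cancel]
        ring
      · have hc : ((N.descFactorial (m+1) : ℝ)) = ((N : ℝ) - m) * N.descFactorial m := by
          rw [Nat.descFactorial_succ]
          push_cast [Nat.cast_sub (Nat.le_of_succ_le hm)]
          ring
        simp [he, hc]
        push_cast [Nat.cast_sub (Nat.le_of_succ_le hm)]
        ring

lemma eval_iter (N m : ℕ) : (Dop^[m] ((1 - X : Polynomial ℝ) ^ N)).eval 1
    = ∑ k ∈ Finset.range (N + 1), (-1 : ℝ) ^ k * (N.choose k : ℝ) * (k : ℝ) ^ m := by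
  rw [one_sub_X_pow, Dop_iter_sum, eval_finset_sum]
  simp [mul_assoc]

lemma S_zero {N m : ℕ} (h : m < N) :
    ∑ k ∈ Finset.range (N + 1), (-1 : ℝ) ^ k * (N.choose k : ℝ) * (k : ℝ) ^ m = 0 := by
  obtain ⟨r, hr, -⟩ := struct N m h.le
  rw [← eval_iter, hr]
  have h1 : N - m ≠ 0 := by omega
  simp [zero_pow h1]

lemma S_top (N : ℕ) :
    ∑ k ∈ Finset.range (N + 1), (-1 : ℝ) ^ k * (N.choose k : ℝ) * (k : ℝ) ^ N
      = (-1) ^ N * N.factorial := by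
  obtain ⟨r, hr, he⟩ := struct N N le_rfl
  rw [← eval_iter, hr]
  simp [he, Nat.descFactorial_self]

lemma T_expand (N m : ℕ) :
    ∑ k ∈ Finset.range (N + 1), (-1 : ℝ) ^ k * (N.choose k : ℝ) * ((N : ℝ) - 2 * k) ^ m
      = ∑ j ∈ Finset.range (m + 1), ((-2 : ℝ) ^ j * (N : ℝ) ^ (m - j) * (m.choose j : ℝ))
          * ∑ k ∈ Finset.range (N + 1), (-1 : ℝ) ^ k * (N.choose k : ℝ) * (k : ℝ) ^ j := by
  have hpt : ∀ k : ℕ, ((N : ℝ) - 2 * k) ^ m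
      = ∑ j ∈ Finset.range (m + 1), (-2 : ℝ) ^ j * (k : ℝ) ^ j * (N : ℝ) ^ (m - j) * (m.choose j : ℝ) := by
    intro k
    have h : ((N : ℝ) - 2 * k) = (-2 * k) + N := by ring
    rw [h, add_pow]
    refine Finset.sum_congr rfl fun j _ => ?_
    rw [mul_pow]
    try ring
  simp only [hpt, Finset.mul_sum]
  rw [Finset.sum_comm]
  refine Finset.sum_congr rfl fun j _ => ?_
  refine Finset.sum_congr rfl fun k _ => ?_
  ring

lemma T_zero {N m : ℕ} (h : m < N) :
    ∑ k ∈ Finset.range (N + 1), (-1 : ℝ) ^ k * (N.choose k : ℝ) * ((N : ℝ) - 2 * k) ^ m = 0 := by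
  rw [T_expand]
  refine Finset.sum_eq_zero fun j hj => ?_
  rw [S_zero (lt_of_lt_of_le (Finset.mem_range.mp hj) h), mul_zero]

lemma T_top (N : ℕ) :
    ∑ k ∈ Finset.range (N + 1), (-1 : ℝ) ^ k * (N.choose k : ℝ) * ((N : ℝ) - 2 * k) ^ N
      = 2 ^ N * N.factorial := by
  rw [T_expand]
  rw [Finset.sum_eq_single N]
  · rw [S_top]
    have h1 : (-2 : ℝ) ^ N * (-1 : ℝ) ^ N = 2 ^ N := by
      rw [← mul_pow]; norm_num
    rw [Nat.sub_self, pow_zero, Nat.choose_self]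
    push_cast
    calc (-2 : ℝ) ^ N * 1 * 1 * ((-1) ^ N * ↑N.factorial)
        = ((-2 : ℝ) ^ N * (-1) ^ N) * ↑N.factorial := by ring
      _ = 2 ^ N * ↑N.factorial := by rw [h1]
  · intro j hj hjne
    rw [S_zero (lt_of_le_of_ne (Nat.lt_succ_iff.mp (Finset.mem_range.mp hj)) hjne), mul_zero]
  · intro h; exact absurd (Finset.self_mem_range_succ N) h


lemma hasSum_exp_real (x : ℝ) :
    HasSum (fun n : ℕ => x ^ n / n.factorial) (Real.exp x) := by
  rw [Real.exp_eq_exp_ℝ]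
  exact NormedSpace.expSeries_div_hasSum_exp x

lemma hs1 (N : ℕ) (t : ℝ) :
    HasSum (fun m : ℕ =>
      (∑ k ∈ Finset.range (N + 1), (-1 : ℝ) ^ k * (N.choose k : ℝ) * ((N : ℝ) - 2 * k) ^ m)
        * t ^ m / m.factorial / 2 ^ N)
      (Real.sinh t ^ N) := by
  have hk : ∀ k ∈ Finset.range (N + 1),
      HasSum (fun m : ℕ =>
        (-1 : ℝ) ^ k * (N.choose k : ℝ) * (((N : ℝ) - 2 * k) ^ m * t ^ m / m.factorial))
        ((-1 : ℝ) ^ k * (N.choose k : ℝ) * Real.exp (((N : ℝ) - 2 * k) * t)) := by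
    intro k _
    have h := (hasSum_exp_real (((N : ℝ) - 2 * k) * t)).mul_left
      ((-1 : ℝ) ^ k * (N.choose k : ℝ))
    simpa [mul_pow, mul_div_assoc] using h
  have htot := hasSum_sum hk
  have hexp : ∑ k ∈ Finset.range (N + 1),
      (-1 : ℝ) ^ k * (N.choose k : ℝ) * Real.exp (((N : ℝ) - 2 * k) * t)
      = (2 * Real.sinh t) ^ N := by
    have h2 : (2 : ℝ) * Real.sinh t = -Real.exp (-t) + Real.exp t := by
      rw [Real.sinh_eq]; ring
    rw [h2, add_pow]
    refine Finset.sum_congr rfl fun k hk => ?_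
    have hkN : k ≤ N := Nat.lt_succ_iff.mp (Finset.mem_range.mp hk)
    have ha : ((N : ℝ) - 2 * k) * t = ((N - k : ℕ) : ℝ) * t + (k : ℝ) * (-t) := by
      push_cast [Nat.cast_sub hkN]; ring
    rw [ha, Real.exp_add, Real.exp_nat_mul, Real.exp_nat_mul, neg_pow]
    ring
  rw [hexp] at htot
  have htot2 := htot.div_const ((2 : ℝ) ^ N)
  have hv : (2 * Real.sinh t) ^ N / 2 ^ N = Real.sinh t ^ N := by
    rw [mul_pow, mul_comm, mul_div_assoc, div_self (by positivity : (2:ℝ)^N ≠ 0), mul_one]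
  rw [hv] at htot2
  have hfe : (fun m : ℕ => (∑ k ∈ Finset.range (N + 1),
        (-1 : ℝ) ^ k * (N.choose k : ℝ) * (((N : ℝ) - 2 * k) ^ m * t ^ m / m.factorial)) / 2 ^ N)
      = fun m : ℕ =>
      (∑ k ∈ Finset.range (N + 1), (-1 : ℝ) ^ k * (N.choose k : ℝ) * ((N : ℝ) - 2 * k) ^ m)
        * t ^ m / m.factorial / 2 ^ N := by
    funext m
    rw [Finset.sum_mul, Finset.sum_div, Finset.sum_div, Finset.sum_div]
    refine Finset.sum_congr rfl fun k _ => ?_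
    ring
  rwa [hfe] at htot2


noncomputable def bcoef (s : ℕ) : ℕ → ℝ := fun m =>
  (∑ k ∈ Finset.range (2 * s + 1),
      (-1 : ℝ) ^ k * ((2 * s).choose k : ℝ) * (((2 * s : ℕ) : ℝ) - 2 * k) ^ (m + 2 * s))
    / (m + 2 * s).factorial / 2 ^ (2 * s)

lemma bcoef_hasSum (s : ℕ) {t : ℝ} (ht : t ≠ 0) :
    HasSum (fun m : ℕ => bcoef s m * t ^ m) (Real.sinh t ^ (2 * s) / t ^ (2 * s)) := by
  set F : ℕ → ℝ := fun m : ℕ =>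
      (∑ k ∈ Finset.range (2 * s + 1),
        (-1 : ℝ) ^ k * ((2 * s).choose k : ℝ) * (((2 * s : ℕ) : ℝ) - 2 * k) ^ m)
        * t ^ m / m.factorial / 2 ^ (2 * s) with hF
  have h1 : HasSum F (Real.sinh t ^ (2 * s)) := hs1 (2 * s) t
  have hzero : ∑ i ∈ Finset.range (2 * s), F i = 0 := by
    refine Finset.sum_eq_zero fun i hi => ?_
    rw [hF]
    simp only
    rw [T_zero (Finset.mem_range.mp hi)]
    simp
  have h2 : HasSum (fun n : ℕ => F (n + 2 * s)) (Real.sinh t ^ (2 * s)) :=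
    (hasSum_nat_add_iff (f := F) (2 * s)).mpr (by rwa [hzero, add_zero])
  have h3 := h2.div_const (t ^ (2 * s))
  have hfe : (fun n : ℕ => F (n + 2 * s) / t ^ (2 * s))
      = fun n : ℕ => bcoef s n * t ^ n := by
    funext n
    rw [hF]
    simp only
    rw [bcoef, pow_add]
    field_simp
  rwa [hfe] at h3

lemma bcoef_zero (s : ℕ) : bcoef s 0 = 1 := by
  rw [bcoef]
  simp only [zero_add]
  rw [T_top]
  have h1 : ((2 * s).factorial : ℝ) ≠ 0 := Nat.cast_ne_zero.mpr (Nat.factorial_ne_zero _)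
  have h2 : (2 : ℝ) ^ (2 * s) ≠ 0 := by positivity
  field_simp

lemma bcoef_summable (s : ℕ) (t : ℝ) : Summable (fun n : ℕ => bcoef s n * t ^ n) := by
  rcases eq_or_ne t 0 with h | h
  · subst h
    refine summable_of_ne_finset_zero (s := {0}) fun n hn => ?_
    rw [zero_pow (by simpa using hn), mul_zero]
  · exact (bcoef_hasSum s h).summable

noncomputable def bps (s : ℕ) : FormalMultilinearSeries ℝ ℝ ℝ :=
  FormalMultilinearSeries.ofScalars ℝ (bcoef s)

lemma bps_radius (s : ℕ) : (bps s).radius = ⊤ := by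
  refine ENNReal.eq_top_of_forall_nnreal_le fun r => (bps s).le_radius_of_isBigO ?_
  have h := ((bcoef_summable s r).tendsto_atTop_zero.isBigO_one ℝ).norm_left
  refine h.congr' ?_ (Filter.EventuallyEq.refl _ _)
  filter_upwards [] with n
  rw [bps, FormalMultilinearSeries.ofScalars_norm, norm_mul, norm_pow,
    Real.norm_eq_abs, Real.norm_eq_abs, abs_of_nonneg r.coe_nonneg]


lemma bfun_hasFPowerSeries (s : ℕ) :
    HasFPowerSeriesOnBall
      (fun t : ℝ => if t = 0 then 1 else (Real.sinh t / t) ^ (2 * s)) (bps s) 0 ⊤ := by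
  refine ⟨(bps_radius s).symm ▸ le_rfl, ENNReal.zero_lt_top, ?_⟩
  intro y hy
  simp only [zero_add]
  have hps : (fun n => bps s n fun _ => y) = fun n => bcoef s n * y ^ n := by
    funext n
    rw [bps, FormalMultilinearSeries.ofScalars_apply_eq, smul_eq_mul]
  rw [hps]
  rcases eq_or_ne y 0 with h | h
  · subst h
    rw [if_pos rfl]
    have h0 := hasSum_single (f := fun n : ℕ => bcoef s n * (0 : ℝ) ^ n) 0
      (fun b hb => by simp only [zero_pow hb, mul_zero])
    simpa [bcoef_zero s] using h0
  · rw [if_neg h, div_pow]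
    exact bcoef_hasSum s h

lemma bfun_iteratedDeriv (s n : ℕ) :
    iteratedDeriv n (fun t : ℝ => if t = 0 then 1 else (Real.sinh t / t) ^ (2 * s)) 0
      = n.factorial * bcoef s n := by
  have h := (bfun_hasFPowerSeries s).factorial_smul 1 n
  rw [iteratedDeriv_eq_iteratedFDeriv, ← h, bps, FormalMultilinearSeries.ofScalars_apply_eq]
  simp [nsmul_eq_mul]

theorem b2s_eq_maclaurin_coeff (s p : ℕ) (hs : 1 ≤ s) :
    (1 / 2 : ℝ) * (1 / ((s.factorial : ℝ) ^ 2 * 4 ^ (s + p))) *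
        ∑ k ∈ Finset.range (2 * s + 1),
          (-1) ^ k * ((2 * s).choose k : ℝ) * (2 * (s : ℝ) - 2 * k) ^ (2 * (s + p)) =
      (1 / (4 ^ p * (s.factorial : ℝ) ^ 2)) * (1 / 2) * ((2 * s + 2 * p).factorial : ℝ) *
        (iteratedDeriv (2 * p)
            (fun t : ℝ => if t = 0 then 1 else (Real.sinh t / t) ^ (2 * s)) 0 /
          (2 * p).factorial) := by
  rw [bfun_iteratedDeriv s (2 * p), bcoef]
  have hE : 2 * p + 2 * s = 2 * (s + p) := by ring
  have hC : (((2 * s : ℕ) : ℝ)) = 2 * (s : ℝ) := by push_cast; ring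
  rw [hE, hC]
  have hF : (2 * s + 2 * p).factorial = (2 * (s + p)).factorial := by
    congr 1
    ring
  rw [hF]
  have h4 : (4 : ℝ) ^ (s + p) = 2 ^ (2 * s) * 4 ^ p := by
    rw [show (4 : ℝ) = 2 ^ 2 by norm_num, ← pow_mul, ← pow_mul]
    rw [show 2 * (s + p) = 2 * s + 2 * p by ring, pow_add, pow_mul]
  have hsf : (s.factorial : ℝ) ≠ 0 := Nat.cast_ne_zero.mpr (Nat.factorial_ne_zero _)
  have hpf : ((2 * p).factorial : ℝ) ≠ 0 := Nat.cast_ne_zero.mpr (Nat.factorial_ne_zero _)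
  have hspf : ((2 * (s + p)).factorial : ℝ) ≠ 0 := Nat.cast_ne_zero.mpr (Nat.factorial_ne_zero _)
  have h2 : (2 : ℝ) ^ (2 * s) ≠ 0 := by positivity
  rw [h4]
  field_simp
end
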